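/- Taylor expansion at zero step size of the one-step dynamic programming operator: let a_1,…,a_J ≥ 0 and δ_1,…,δ_J > 0 be real numbers and let c : ℕ^J → ℝ be bounded. For Δt ≥ 0 define F(Δt) := exp((−2·Σ_{j=1}^J a_j + Σ_{j=1}^J δ_j)·Δt) · Σ_{p ∈ ℕ^J} Δt^{|p|} · Π_{j=1}^J (a_j^{2p_j}/(δ_j^{p_j}·p_j!)) · c(p), where |p| := Σ_{j=1}^J p_j. Then the series defining F(Δt) converges absolutely for every Δt ≥ 0, F(0) = c(0), and F is right-differentiable at 0 with right derivative F'(0⁺) = (−2·Σ_{j=1}^J a_j + Σ_{j=1}^J δ_j)·c(0) + Σ_{j=1}^J (a_j²/δ_j)·c(e_j), where e_j ∈ ℕ^J denotes the j-th standard unit vector. -/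

import Mathlib

set_option maxHeartbeats 1000000


noncomputable section

open scoped BigOperators
open Real

/-- Summand of the one-step dynamic programming operator:
`Δt^{|p|} · ∏_j (a_j^{2p_j}/(δ_j^{p_j} p_j!)) · c(p)`, where `|p| = ∑_j p_j`
(with `0^0 = 1`). -/
def dpTerm {J : ℕ} (a δ : Fin J → ℝ) (c : (Fin J → ℕ) → ℝ) (Δt : ℝ)
    (p : Fin J → ℕ) : ℝ :=
  Δt ^ (∑ j, p j) *
    (∏ j, (a j) ^ (2 * p j) / ((δ j) ^ (p j) * ((p j).factorial : ℝ))) * c p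

/-- The one-step dynamic programming operator
`F(Δt) = exp((−2 ∑_j a_j + ∑_j δ_j)·Δt) · ∑_{p ∈ ℕ^J} dpTerm(Δt,p)`. -/
def dpF {J : ℕ} (a δ : Fin J → ℝ) (c : (Fin J → ℕ) → ℝ) (Δt : ℝ) : ℝ :=
  Real.exp ((-2 * ∑ j, a j + ∑ j, δ j) * Δt) * ∑' p : Fin J → ℕ, dpTerm a δ c Δt p

/-- Summability of products over `Fin J → ℕ` of summable nonnegative families. -/
lemma summable_pi_prod : ∀ {J : ℕ} (f : Fin J → ℕ → ℝ),
    (∀ j n, 0 ≤ f j n) → (∀ j, Summable (f j)) →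
    Summable (fun p : Fin J → ℕ => ∏ j, f j (p j)) := by
  intro J
  induction J with
  | zero =>
    intro f _ _
    have h1 : (fun p : Fin 0 → ℕ => ∏ j, f j (p j)) = fun _ => (1 : ℝ) := by
      funext p; simp
    rw [h1]
    exact Summable.of_finite
  | succ J ih =>
    intro f hnn hs
    have ih' : Summable (fun p : Fin J → ℕ => ∏ j, f j.succ (p j)) :=
      ih (fun j => f j.succ) (fun j n => hnn _ _) (fun j => hs _)
    have key : Summable (fun x : ℕ × (Fin J → ℕ) =>
        (f 0 x.1) * ∏ j, f j.succ (x.2 j)) := by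
      apply Summable.mul_of_nonneg (hs 0) ih' (fun n => hnn 0 n)
      exact fun q => Finset.prod_nonneg fun j _ => hnn _ _
    have heq : ((fun p : Fin (J+1) → ℕ => ∏ j, f j (p j)) ∘
        ⇑(Fin.consEquiv (fun _ => ℕ))) =
        fun x : ℕ × (Fin J → ℕ) => (f 0 x.1) * ∏ j, f j.succ (x.2 j) := by
      funext x
      simp only [Function.comp_apply, Fin.consEquiv, Equiv.coe_fn_mk]
      rw [Fin.prod_univ_succ]
      simp [Fin.cons_zero, Fin.cons_succ]
    exact ((Fin.consEquiv (fun _ => ℕ)).summable_iff).1 (heq ▸ key)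

/-- **Taylor expansion at zero step size of the one-step dynamic programming
operator.** For `a_j ≥ 0`, `δ_j > 0` and bounded `c : ℕ^J → ℝ`: the series defining
`F(Δt)` converges absolutely for every `Δt ≥ 0`, `F(0) = c(0)`, and `F` is
right-differentiable at `0` with right derivative
`(−2 ∑_j a_j + ∑_j δ_j)·c(0) + ∑_j (a_j²/δ_j)·c(e_j)`. -/
theorem dp_operator_taylor_at_zero
    {J : ℕ} (a δ : Fin J → ℝ) (ha : ∀ j, 0 ≤ a j) (hδ : ∀ j, 0 < δ j)
    (c : (Fin J → ℕ) → ℝ) (hc : ∃ C, ∀ p, |c p| ≤ C) :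
    (∀ Δt : ℝ, 0 ≤ Δt → Summable (fun p : Fin J → ℕ => |dpTerm a δ c Δt p|)) ∧
    dpF a δ c 0 = c 0 ∧
    HasDerivWithinAt (dpF a δ c)
      ((-2 * ∑ j, a j + ∑ j, δ j) * c 0 + ∑ j, (a j) ^ 2 / δ j * c (Pi.single j 1))
      (Set.Ici 0) 0 := by
  classical
  obtain ⟨C, hC⟩ := hc
  have hC0 : 0 ≤ C := le_trans (abs_nonneg _) (hC 0)
  set r : Fin J → ℝ := fun j => (a j) ^ 2 / δ j with hrdef
  have hr0 : ∀ j, 0 ≤ r j := fun j => div_nonneg (sq_nonneg _) (hδ j).le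
  set b : (Fin J → ℕ) → ℝ :=
    fun p => ∏ j, r j ^ p j / ((p j).factorial : ℝ) with hbdef
  have hb0 : ∀ p, 0 ≤ b p := fun p => Finset.prod_nonneg fun j _ =>
    div_nonneg (pow_nonneg (hr0 j) _) (by positivity)
  -- dpTerm rewritten via b
  have hterm : ∀ t p, dpTerm a δ c t p = t ^ (∑ j, p j) * b p * c p := by
    intro t p
    unfold dpTerm
    congr 2
    apply Finset.prod_congr rfl
    intro j _
    rw [hrdef]
    rw [div_pow, div_div, ← pow_mul]
  -- the weight function
  set w : ℝ → (Fin J → ℕ) → ℝ :=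
    fun t p => ∏ j, (t * r j) ^ p j / ((p j).factorial : ℝ) with hwdef
  have hw_eq : ∀ (t : ℝ) p, w t p = t ^ (∑ j, p j) * b p := by
    intro t p
    rw [hwdef, hbdef]
    simp only
    calc (∏ j, (t * r j) ^ p j / ((p j).factorial : ℝ))
        = ∏ j, t ^ p j * (r j ^ p j / ((p j).factorial : ℝ)) := by
          apply Finset.prod_congr rfl; intro j _; rw [mul_pow, mul_div_assoc]
      _ = (∏ j, t ^ p j) * ∏ j, r j ^ p j / ((p j).factorial : ℝ) :=
          Finset.prod_mul_distrib
      _ = t ^ (∑ j, p j) * ∏ j, r j ^ p j / ((p j).factorial : ℝ) := by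
          rw [Finset.prod_pow_eq_pow_sum]
  have hw_nonneg : ∀ (t : ℝ), 0 ≤ t → ∀ p, 0 ≤ w t p := by
    intro t ht p
    exact Finset.prod_nonneg fun j _ =>
      div_nonneg (pow_nonneg (mul_nonneg ht (hr0 j)) _) (by positivity)
  have hw_summable : ∀ (t : ℝ), 0 ≤ t → Summable (w t) := by
    intro t ht
    rw [hwdef]
    exact summable_pi_prod (fun j n => (t * r j) ^ n / (n.factorial : ℝ))
      (fun j n => div_nonneg (pow_nonneg (mul_nonneg ht (hr0 j)) _) (by positivity))
      (fun j => Real.summable_pow_div_factorial (t * r j))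
  -- part 1 : summability
  have habs : ∀ (t : ℝ), 0 ≤ t → ∀ p, |dpTerm a δ c t p| = t ^ (∑ j, p j) * b p * |c p| := by
    intro t ht p
    rw [hterm, abs_mul, abs_of_nonneg (mul_nonneg (pow_nonneg ht _) (hb0 p))]
  have hsum1 : ∀ Δt : ℝ, 0 ≤ Δt →
      Summable (fun p : Fin J → ℕ => |dpTerm a δ c Δt p|) := by
    intro t ht
    apply Summable.of_nonneg_of_le (fun p => abs_nonneg _)
      (g := fun p => |dpTerm a δ c t p|) (f := fun p => w t p * C)
    · intro p
      rw [habs t ht p, ← hw_eq]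
      exact mul_le_mul_of_nonneg_left (hC p) (hw_nonneg t ht p)
    · exact (hw_summable t ht).mul_right C
  have hdp_summ : ∀ (t : ℝ), 0 ≤ t → Summable (dpTerm a δ c t) :=
    fun t ht => summable_abs_iff.1 (hsum1 t ht)
  -- b is summable
  have hb_summ : Summable b := by
    rw [hbdef]
    exact summable_pi_prod (fun j n => r j ^ n / (n.factorial : ℝ))
      (fun j n => div_nonneg (pow_nonneg (hr0 j) _) (by positivity))
      (fun j => Real.summable_pow_div_factorial (r j))
  set M : ℝ := ∑' p, b p with hMdef
  have hM0 : 0 ≤ M := tsum_nonneg hb0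
  -- the tsum function
  set G : ℝ → ℝ := fun t => ∑' p, dpTerm a δ c t p with hGdef
  -- dpTerm at p = 0
  have hterm0 : ∀ t : ℝ, dpTerm a δ c t 0 = c 0 := by
    intro t
    unfold dpTerm
    simp
  have hG0 : G 0 = c 0 := by
    rw [hGdef]
    simp only
    rw [tsum_eq_single 0 ?h, hterm0]
    intro p hp
    have hps : ∑ j, p j ≠ 0 := by
      intro h
      exact hp (funext fun j => by
        simpa using (Finset.sum_eq_zero_iff).1 h j (Finset.mem_univ j))
    unfold dpTerm
    rw [zero_pow hps, zero_mul, zero_mul]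
  -- the finite set of low-order multi-indices
  set T : Finset (Fin J → ℕ) :=
    insert 0 (Finset.image (fun j => (Pi.single j 1 : Fin J → ℕ)) Finset.univ)
    with hTdef
  have hsingle_ne : ∀ j, (Pi.single j 1 : Fin J → ℕ) ≠ 0 := by
    intro j h
    have := congrFun h j
    simp at this
  have hmemT : ∀ p : Fin J → ℕ, (∑ j, p j) ≤ 1 → p ∈ T := by
    intro p hp
    by_cases h0 : p = 0
    · rw [hTdef, h0]; exact Finset.mem_insert_self _ _
    · obtain ⟨j, hj⟩ : ∃ j, p j ≠ 0 := by
        by_contra h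
        push_neg at h
        exact h0 (funext fun j => h j)
      have h1 : 1 ≤ p j := Nat.one_le_iff_ne_zero.2 hj
      have hle : p j ≤ ∑ k, p k :=
        Finset.single_le_sum (fun k _ => Nat.zero_le _) (Finset.mem_univ j)
      have hpj : p j = 1 := le_antisymm (hle.trans hp) h1
      have hsum1' : ∑ k, p k = 1 := le_antisymm hp (hpj ▸ hle)
      have herase : ∑ k ∈ Finset.univ.erase j, p k = 0 := by
        have := Finset.add_sum_erase Finset.univ p (Finset.mem_univ j)
        omega
      have hzero : ∀ k, k ≠ j → p k = 0 := by
        intro k hk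
        exact (Finset.sum_eq_zero_iff).1 herase k
          (Finset.mem_erase.2 ⟨hk, Finset.mem_univ k⟩)
      have : p = Pi.single j 1 := by
        funext k
        rcases eq_or_ne k j with rfl | hk
        · simp [hpj]
        · simp [Pi.single_apply, hk, hzero k hk]
      rw [hTdef, this]
      exact Finset.mem_insert_of_mem
        (Finset.mem_image.2 ⟨j, Finset.mem_univ j, rfl⟩)
  have hnotT : ∀ p : Fin J → ℕ, p ∉ T → 2 ≤ ∑ j, p j := by
    intro p hp
    by_contra h
    exact hp (hmemT p (by omega))
  -- dpTerm at a unit vector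
  have hsum_single : ∀ j : Fin J, (∑ k, (Pi.single j 1 : Fin J → ℕ) k) = 1 := by
    intro j
    simp [Pi.single_apply]
  have htermSingle : ∀ (t : ℝ) (j : Fin J),
      dpTerm a δ c t (Pi.single j 1) = t * ((a j) ^ 2 / δ j * c (Pi.single j 1)) := by
    intro t j
    unfold dpTerm
    rw [hsum_single j, pow_one]
    have hprod : (∏ k, (a k) ^ (2 * (Pi.single j 1 : Fin J → ℕ) k) /
        ((δ k) ^ ((Pi.single j 1 : Fin J → ℕ) k) *
          (((Pi.single j 1 : Fin J → ℕ) k).factorial : ℝ))) = (a j) ^ 2 / δ j := by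
      rw [Finset.prod_eq_single j]
      · simp
      · intro k _ hk
        simp [Pi.single_apply, hk]
      · intro h; exact absurd (Finset.mem_univ j) h
    rw [hprod]; ring
  -- the low-order part
  set S : ℝ := ∑ j, (a j) ^ 2 / δ j * c (Pi.single j 1) with hSdef
  have hTsum : ∀ t : ℝ, (∑ p ∈ T, dpTerm a δ c t p) = c 0 + t * S := by
    intro t
    rw [hTdef]
    rw [Finset.sum_insert (by
      intro h
      obtain ⟨j, _, hj⟩ := Finset.mem_image.1 h
      exact hsingle_ne j hj)]
    rw [Finset.sum_image (by
      intro x _ y _ hxy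
      have := congrFun hxy x
      simp [Pi.single_apply] at this
      by_contra hne
      exact hne this)]
    rw [hterm0]
    congr 1
    rw [hSdef, Finset.mul_sum]
    exact Finset.sum_congr rfl fun j _ => htermSingle t j
  set L : ℝ → (Fin J → ℕ) → ℝ :=
    fun t p => if p ∈ T then dpTerm a δ c t p else 0 with hLdef
  have hLsumm : ∀ t : ℝ, Summable (L t) := by
    intro t
    exact summable_of_ne_finset_zero (s := T) (fun p hp => if_neg hp)
  have hLtsum : ∀ t : ℝ, ∑' p, L t p = c 0 + t * S := by
    intro t
    rw [tsum_eq_sum (s := T) (fun p hp => if_neg hp)]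
    rw [← hTsum t]
    exact Finset.sum_congr rfl fun p hp => if_pos hp
  -- the key quadratic bound
  have hkey : ∀ t : ℝ, 0 ≤ t → t ≤ 1 → |G t - (c 0 + t * S)| ≤ C * M * t ^ 2 := by
    intro t ht ht1
    have hg : Summable (fun p => dpTerm a δ c t p - L t p) :=
      (hdp_summ t ht).sub (hLsumm t)
    have htsg : ∑' p, (dpTerm a δ c t p - L t p) = G t - (c 0 + t * S) := by
      rw [Summable.tsum_sub (hdp_summ t ht) (hLsumm t), hLtsum t, hGdef]
    have hptwise : ∀ p, |dpTerm a δ c t p - L t p| ≤ C * t ^ 2 * b p := by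
      intro p
      by_cases hp : p ∈ T
      · rw [hLdef]
        simp only [if_pos hp, sub_self, abs_zero]
        exact mul_nonneg (mul_nonneg hC0 (by positivity)) (hb0 p)
      · rw [hLdef]
        simp only [if_neg hp, sub_zero]
        rw [habs t ht p]
        have h2 : 2 ≤ ∑ j, p j := hnotT p hp
        have hpow : t ^ (∑ j, p j) ≤ t ^ 2 := pow_le_pow_of_le_one ht ht1 h2
        calc t ^ (∑ j, p j) * b p * |c p|
            ≤ t ^ 2 * b p * C := by
              apply mul_le_mul
              · exact mul_le_mul_of_nonneg_right hpow (hb0 p)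
              · exact hC p
              · exact abs_nonneg _
              · exact mul_nonneg (by positivity) (hb0 p)
          _ = C * t ^ 2 * b p := by ring
    have habs_summ : Summable (fun p => |dpTerm a δ c t p - L t p|) :=
      summable_abs_iff.2 hg
    calc |G t - (c 0 + t * S)|
        = |∑' p, (dpTerm a δ c t p - L t p)| := by rw [htsg]
      _ ≤ ∑' p, |dpTerm a δ c t p - L t p| := by
          simpa using norm_tsum_le_tsum_norm (f := fun p => dpTerm a δ c t p - L t p)
            (by simpa using habs_summ)
      _ ≤ ∑' p, C * t ^ 2 * b p :=
          Summable.tsum_le_tsum hptwise habs_summ (hb_summ.mul_left (C * t ^ 2))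
      _ = C * t ^ 2 * M := by rw [tsum_mul_left, hMdef]
      _ = C * M * t ^ 2 := by ring
  -- derivative of G within Ici 0 at 0
  have hGd : HasDerivWithinAt G S (Set.Ici 0) 0 := by
    rw [hasDerivWithinAt_iff_isLittleO]
    have big : (fun t => G t - G 0 - (t - 0) • S)
        =O[nhdsWithin 0 (Set.Ici 0)] (fun t => t ^ 2) := by
      apply Asymptotics.IsBigO.of_bound (C * M)
      filter_upwards [Icc_mem_nhdsGE_of_mem
        (Set.mem_Ico.2 ⟨le_refl (0:ℝ), zero_lt_one⟩)] with t ht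
      obtain ⟨ht0, ht1⟩ := ht
      rw [hG0]
      simp only [sub_zero, smul_eq_mul, Real.norm_eq_abs]
      have : |t ^ 2| = t ^ 2 := abs_of_nonneg (by positivity)
      rw [this]
      calc |G t - c 0 - t * S| = |G t - (c 0 + t * S)| := by ring_nf
        _ ≤ C * M * t ^ 2 := hkey t ht0 ht1
    have small : (fun t : ℝ => t ^ 2) =o[nhdsWithin 0 (Set.Ici 0)] (fun t => t - 0) := by
      simp only [sub_zero]
      exact (Asymptotics.isLittleO_pow_id (by norm_num)).mono nhdsWithin_le_nhds
    exact big.trans_isLittleO small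
  -- assemble
  refine ⟨hsum1, ?_, ?_⟩
  · show Real.exp _ * G 0 = c 0
    rw [hG0]
    simp [dpF]
  · set lam : ℝ := -2 * ∑ j, a j + ∑ j, δ j with hlamdef
    have h1 : HasDerivAt (fun t : ℝ => lam * t) lam 0 := by
      simpa using (hasDerivAt_id (0:ℝ)).const_mul lam
    have h2 : HasDerivAt (fun t : ℝ => Real.exp (lam * t)) lam 0 := by
      have := h1.exp
      simpa using this
    have hmul := (h2.hasDerivWithinAt (s := Set.Ici 0)).mul hGd
    have hval : lam * G 0 + Real.exp (lam * 0) * S = lam * c 0 + S := by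
      rw [hG0]; simp
    rw [hval] at hmul
    exact hmul
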